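/- The maps Σ := Ψ_{t/(1−t)}, T := Ψ_{−t}, exp := Ψ_{e^t−1}, and log := Ψ_{log(1+t)} on k⟨A⟩ satisfy Σ = exp ∘ T ∘ log ∘ T. -/

import Mathlib

/-!
Setting (Hoffman–Ihara, "Quasi-shuffle products revisited"):
`k` is a field containing `ℚ`, `A` a countable set of letters, `kA` the `k`-vector space
with basis `A` equipped with an associative commutative bilinear product `⋄` (given below as
a bilinear map `d`), and `k⟨A⟩` the noncommutative polynomial algebra on `A`, realized as
the monoid algebra of the free monoid of words on `A`.
-/

noncomputable section

open scoped BigOperators TensorProduct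

section QuasiShuffle

variable (k A : Type*) [Field k] [CharZero k] [Countable A]

/-- `k⟨A⟩`, the noncommutative polynomial algebra on `A`: the `k`-vector space with basis
the words in `A`, with concatenation product and unit the empty word. -/
abbrev KAlg : Type _ := MonoidAlgebra k (FreeMonoid A)

/-- `kA`, the `k`-vector space with basis `A`. -/
abbrev KA : Type _ := A →₀ k

variable {k A}

/-- The basis element of `k⟨A⟩` corresponding to a word. -/
def word (w : List A) : KAlg k A := MonoidAlgebra.of k (FreeMonoid A) (FreeMonoid.ofList w)

/-- Linear extension to `k⟨A⟩` of a function defined on words. -/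
def liftW {N : Type*} [AddCommMonoid N] [Module k N] (g : List A → N) :
    KAlg k A →ₗ[k] N :=
  (Finsupp.lsum k fun w => LinearMap.toSpanSingleton k N (g (FreeMonoid.toList w))) ∘ₗ
    (MonoidAlgebra.coeffLinearEquiv k).toLinearMap

/-- The inclusion of `kA` into `k⟨A⟩` (letters as one-letter words). -/
def incl : KA k A →ₗ[k] KAlg k A :=
  Finsupp.lsum k fun a => LinearMap.toSpanSingleton k (KAlg k A) (word [a])

/-- The `⋄`-product (via the bilinear map `d` on `kA`) of the letters of a word, as an
element of `kA`; `0` for the empty word. -/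
def dChunk (d : KA k A →ₗ[k] KA k A →ₗ[k] KA k A) : List A → KA k A
  | [] => 0
  | a :: t => t.foldl (fun x b => d x (Finsupp.single b 1)) (Finsupp.single a 1)

/-- `I[w]`: for a composition `I` of the length of the word `w`, the concatenation product
of the `⋄`-products of the blocks of `w` determined by `I`. -/
def IW (d : KA k A →ₗ[k] KA k A →ₗ[k] KA k A) (w : List A) (I : Composition w.length) :
    KAlg k A :=
  ((w.splitWrtComposition I).map fun ch => incl (dChunk d ch)).prod

/-- The linear map `Ψ_f` on `k⟨A⟩` associated to a power series `f = Σ_{n≥1} c_n tⁿ`,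
where `c : ℕ → k` records the coefficients:
`Ψ_f(w) = Σ_{I composition of ℓ(w)} c_{i₁} ⋯ c_{i_m} I[w]`. -/
def Psi (d : KA k A →ₗ[k] KA k A →ₗ[k] KA k A) (c : ℕ → k) : KAlg k A →ₗ[k] KAlg k A :=
  liftW fun w => ∑ I : Composition w.length, (I.blocks.map c).prod • IW d w I

/-- Coefficients of the power series `t/(1-t) = t + t² + t³ + ⋯`. -/
def cSig (k : Type*) [Field k] : ℕ → k := fun n => if n = 0 then 0 else 1

/-- Coefficients of the power series `-t`. -/
def cT (k : Type*) [Field k] : ℕ → k := fun n => if n = 1 then -1 else 0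

/-- Coefficients of the power series `e^t - 1`. -/
def cExp (k : Type*) [Field k] : ℕ → k :=
  fun n => if n = 0 then 0 else (Nat.factorial n : k)⁻¹

/-- Coefficients of the power series `log(1+t)`. -/
def cLog (k : Type*) [Field k] : ℕ → k :=
  fun n => if n = 0 then 0 else (-1) ^ (n - 1) / (n : k)

set_option linter.unusedSectionVars false
set_option linter.unnecessarySimpa false

/-! ### Auxiliary development -/

section Aux

variable {k A : Type*} [Field k] [CharZero k] [Countable A]
variable (d : KA k A →ₗ[k] KA k A →ₗ[k] KA k A)

lemma word_nil : (word [] : KAlg k A) = 1 := rfl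

lemma word_append (u v : List A) : (word (u ++ v) : KAlg k A) = word u * word v := by
  simpa [word] using (MonoidAlgebra.of k (FreeMonoid A)).map_mul
    (FreeMonoid.ofList u) (FreeMonoid.ofList v)

lemma liftW_word {N : Type*} [AddCommMonoid N] [Module k N] (g : List A → N) (w : List A) :
    liftW (k := k) g (word w) = g w := by
  show (Finsupp.lsum k fun x => LinearMap.toSpanSingleton k N (g (FreeMonoid.toList x)))
      (Finsupp.single (FreeMonoid.ofList w) (1 : k)) = g w
  rw [Finsupp.lsum_single, LinearMap.toSpanSingleton_apply, one_smul, FreeMonoid.toList_ofList]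

/-- letter as an element of `KA`. -/
def toKA (a : A) : KA k A := Finsupp.single a (1 : k)

lemma incl_single (a : A) (b : k) : incl (Finsupp.single a b) = b • (word [a] : KAlg k A) := by
  simp [incl, Finsupp.lsum_single, LinearMap.toSpanSingleton_apply]

lemma incl_toKA (a : A) : incl (toKA a : KA k A) = word [a] := by
  simp [toKA, incl_single]

lemma psi_word (c : ℕ → k) (w : List A) :
    Psi d c (word w) = ∑ I : Composition w.length, (I.blocks.map c).prod • IW d w I :=
  liftW_word _ w

lemma ext_word {f g : KAlg k A →ₗ[k] KAlg k A}
    (h : ∀ w : List A, f (word w) = g (word w)) : f = g := by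
  refine MonoidAlgebra.lhom_ext' fun x => ?_
  refine LinearMap.ext_ring ?_
  simpa [word, MonoidAlgebra.of_apply] using h (FreeMonoid.toList x)

/-- The finset of compositions of `n`, as lists of blocks. -/
def Cset (n : ℕ) : Finset (List ℕ) :=
  Finset.univ.image (Composition.blocks (n := n))

lemma mem_Cset {n : ℕ} {l : List ℕ} :
    l ∈ Cset n ↔ l.sum = n ∧ ∀ i ∈ l, 0 < i := by
  constructor
  · rintro h
    rcases Finset.mem_image.1 h with ⟨I, -, rfl⟩
    exact ⟨I.blocks_sum, fun i hi => I.blocks_pos hi⟩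
  · rintro ⟨h1, h2⟩
    exact Finset.mem_image.2 ⟨⟨l, fun {i} hi => h2 i hi, h1⟩, Finset.mem_univ _, rfl⟩

lemma sum_comp_eq_sum_Cset {M : Type*} [AddCommMonoid M] (n : ℕ) (F : List ℕ → M) :
    (∑ I : Composition n, F I.blocks) = ∑ bs ∈ Cset n, F bs := by
  rw [Cset, Finset.sum_image]
  · intro I _ J _ h
    exact Composition.ext h

end Aux

section Aux2

set_option linter.unusedSectionVars false

variable {k A : Type*} [Field k] [CharZero k] [Countable A]
variable (d : KA k A →ₗ[k] KA k A →ₗ[k] KA k A)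

/-- fold of `d` over a list of elements of `KA` (0 for the empty list). -/
def dFold : List (KA k A) → KA k A
  | [] => 0
  | x :: t => t.foldl (fun p q => d p q) x

@[simp] lemma dFold_nil : dFold d ([] : List (KA k A)) = 0 := rfl

@[simp] lemma dFold_cons (x : KA k A) (t : List (KA k A)) :
    dFold d (x :: t) = t.foldl (fun p q => d p q) x := rfl

@[simp] lemma dFold_single (x : KA k A) : dFold d [x] = x := rfl

lemma dFold_map_toKA (l : List A) : dFold d (l.map toKA) = dChunk d l := by
  cases l with
  | nil => rfl
  | cons a t =>
    simp only [List.map_cons, dFold_cons, dChunk, List.foldl_map]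
    rfl

lemma foldl_d_zero (t : List (KA k A)) : t.foldl (fun p q => d p q) 0 = 0 := by
  induction t with
  | nil => rfl
  | cons z t ih => simpa using ih

lemma foldl_d_add (t : List (KA k A)) (x y : KA k A) :
    t.foldl (fun p q => d p q) (x + y)
      = t.foldl (fun p q => d p q) x + t.foldl (fun p q => d p q) y := by
  induction t generalizing x y with
  | nil => rfl
  | cons z t ih => simpa [map_add, LinearMap.add_apply] using ih (d x z) (d y z)

lemma foldl_d_smul (t : List (KA k A)) (b : k) (x : KA k A) :
    t.foldl (fun p q => d p q) (b • x) = b • t.foldl (fun p q => d p q) x := by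
  induction t generalizing x with
  | nil => rfl
  | cons z t ih => simpa [map_smul, LinearMap.smul_apply] using ih (d x z)

lemma foldl_d_assoc (hd_assoc : ∀ x y z, d (d x y) z = d x (d y z))
    (t : List (KA k A)) (x y : KA k A) :
    t.foldl (fun p q => d p q) (d x y) = d x (t.foldl (fun p q => d p q) y) := by
  induction t generalizing y with
  | nil => rfl
  | cons z t ih => simpa [hd_assoc] using ih (d y z)

lemma dFold_append (hd_assoc : ∀ x y z, d (d x y) z = d x (d y z))
    {u v : List (KA k A)} (hu : u ≠ []) (hv : v ≠ []) :
    dFold d (u ++ v) = d (dFold d u) (dFold d v) := by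
  cases u with
  | nil => exact absurd rfl hu
  | cons x u' =>
    cases v with
    | nil => exact absurd rfl hv
    | cons y v' =>
      simp only [List.cons_append, dFold_cons, List.foldl_append]
      exact foldl_d_assoc d hd_assoc v' _ y

lemma dChunk_append (hd_assoc : ∀ x y z, d (d x y) z = d x (d y z))
    {l₁ l₂ : List A} (h₁ : l₁ ≠ []) (h₂ : l₂ ≠ []) :
    dChunk d (l₁ ++ l₂) = d (dChunk d l₁) (dChunk d l₂) := by
  rw [← dFold_map_toKA, ← dFold_map_toKA, ← dFold_map_toKA, List.map_append]
  exact dFold_append d hd_assoc (by simpa using h₁) (by simpa using h₂)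

lemma dFold_map_dChunk (hd_assoc : ∀ x y z, d (d x y) z = d x (d y z)) :
    ∀ (G : List (List A)), G ≠ [] → (∀ g ∈ G, g ≠ []) →
      dFold d (G.map (dChunk d)) = dChunk d G.flatten
  | [], h, _ => absurd rfl h
  | [g], _, _ => by simp
  | g :: g' :: G, _, hne => by
    have hflat : (g' :: G).flatten ≠ [] := by
      have : g' ≠ [] := hne g' (by simp)
      cases g' with
      | nil => exact absurd rfl this
      | cons a t => simp
    have IH := dFold_map_dChunk hd_assoc (g' :: G) (by simp)
      (fun x hx => hne x (List.mem_cons_of_mem _ hx))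
    have hcons : dFold d (dChunk d g :: ((g' :: G).map (dChunk d)))
        = d (dChunk d g) (dFold d ((g' :: G).map (dChunk d))) := by
      have := dFold_append d hd_assoc (u := [dChunk d g]) (v := (g' :: G).map (dChunk d))
        (by simp) (by simp)
      simpa using this
    calc dFold d ((g :: g' :: G).map (dChunk d))
        = d (dChunk d g) (dFold d ((g' :: G).map (dChunk d))) := hcons
      _ = d (dChunk d g) (dChunk d (g' :: G).flatten) := by rw [IH]
      _ = dChunk d (g ++ (g' :: G).flatten) :=
          (dChunk_append d hd_assoc (hne g (by simp)) hflat).symm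
      _ = dChunk d ((g :: g' :: G).flatten) := by simp

end Aux2

section Aux3

set_option linter.unusedSectionVars false

variable {k A : Type*} [Field k] [CharZero k] [Countable A]
variable (d : KA k A →ₗ[k] KA k A →ₗ[k] KA k A)

/-- Product of the images under `incl` of a list of elements of `KA`. -/
def PP (xs : List (KA k A)) : KAlg k A := (xs.map (fun x => incl x)).prod

@[simp] lemma PP_nil : PP ([] : List (KA k A)) = 1 := rfl

@[simp] lemma PP_cons (x : KA k A) (xs : List (KA k A)) :
    PP (x :: xs) = incl x * PP xs := by simp [PP]

lemma PP_append (xs ys : List (KA k A)) : PP (xs ++ ys) = PP xs * PP ys := by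
  simp [PP]

lemma PP_map_toKA (w : List A) : PP ((w.map toKA : List (KA k A))) = word w := by
  induction w with
  | nil => rfl
  | cons a t ih =>
    have : (word [a] : KAlg k A) * word t = word (a :: t) := by
      simpa using (word_append [a] t).symm
    simp [ih, incl_toKA, this]

/-- The `QL` product: split `xs` according to the block list `bs`, fold each chunk with `d`,
apply `incl`, and multiply. -/
def QL (xs : List (KA k A)) (bs : List ℕ) : KAlg k A :=
  ((xs.splitWrtCompositionAux bs).map (fun ch => incl (dFold d ch))).prod

lemma splitAux_map {α β : Type*} (f : α → β) :
    ∀ (bs : List ℕ) (l : List α),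
      (l.map f).splitWrtCompositionAux bs = (l.splitWrtCompositionAux bs).map (List.map f)
  | [], l => rfl
  | b :: bs, l => by
    simp [List.splitWrtCompositionAux_cons, ← List.map_take, ← List.map_drop,
      splitAux_map f bs (l.drop b)]

lemma splitAux_replicate_one {α : Type*} :
    ∀ (l : List α), l.splitWrtCompositionAux (List.replicate l.length 1) = l.map (fun a => [a])
  | [] => rfl
  | a :: t => by
    rw [List.length_cons, List.replicate_succ, List.splitWrtCompositionAux_cons]
    simp [splitAux_replicate_one t]

lemma QL_replicate_one (xs : List (KA k A)) :
    QL d xs (List.replicate xs.length 1) = PP xs := by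
  rw [QL, splitAux_replicate_one, List.map_map, PP]
  congr 1

lemma IW_eq_QL (w : List A) (I : Composition w.length) :
    IW d w I = QL d (w.map toKA) I.blocks := by
  rw [IW, QL, List.splitWrtComposition, splitAux_map, List.map_map]
  congr 1
  apply List.map_congr_left
  intro ch _
  simp [Function.comp, dFold_map_toKA]

end Aux3

section Aux4

set_option linter.unusedSectionVars false

variable {k A : Type*} [Field k] [CharZero k] [Countable A]
variable (d : KA k A →ₗ[k] KA k A →ₗ[k] KA k A)

lemma dFold_add_slot (u v : List (KA k A)) (x y : KA k A) :
    dFold d (u ++ (x + y) :: v) = dFold d (u ++ x :: v) + dFold d (u ++ y :: v) := by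
  cases u with
  | nil => simpa using foldl_d_add d v x y
  | cons a u' =>
    simp only [List.cons_append, dFold_cons, List.foldl_append, List.foldl_cons]
    rw [map_add, foldl_d_add]

lemma dFold_smul_slot (u v : List (KA k A)) (b : k) (x : KA k A) :
    dFold d (u ++ (b • x) :: v) = b • dFold d (u ++ x :: v) := by
  cases u with
  | nil => simpa using foldl_d_smul d v b x
  | cons a u' =>
    simp only [List.cons_append, dFold_cons, List.foldl_append, List.foldl_cons]
    rw [map_smul, foldl_d_smul]

@[simp] lemma QL_cons (xs : List (KA k A)) (b : ℕ) (bs : List ℕ) :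
    QL d xs (b :: bs) = incl (dFold d (xs.take b)) * QL d (xs.drop b) bs := by
  simp [QL, List.splitWrtCompositionAux_cons]

lemma QL_slot :
    ∀ (bs : List ℕ) (u v : List (KA k A)), u.length < bs.sum →
      ∃ (L : KAlg k A) (w₁ w₂ : List (KA k A)) (R : KAlg k A),
        ∀ x : KA k A, QL d (u ++ x :: v) bs = L * (incl (dFold d (w₁ ++ x :: w₂)) * R)
  | [], u, v, h => absurd h (by simp)
  | b :: bs, u, v, h => by
    rcases le_or_gt b u.length with hb | hb
    · have hcov : (u.drop b).length < bs.sum := by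
        simp only [List.length_drop]
        have := List.sum_cons (a := b) (l := bs) ▸ h
        omega
      obtain ⟨L, w₁, w₂, R, hL⟩ := QL_slot bs (u.drop b) v hcov
      refine ⟨incl (dFold d (u.take b)) * L, w₁, w₂, R, fun x => ?_⟩
      rw [QL_cons]
      have h1 : (u ++ x :: v).take b = u.take b := by
        rw [List.take_append, Nat.sub_eq_zero_of_le hb, List.take_zero,
          List.append_nil]
      have h2 : (u ++ x :: v).drop b = u.drop b ++ x :: v := by
        rw [List.drop_append, Nat.sub_eq_zero_of_le hb, List.drop_zero]
      rw [h1, h2, hL x, mul_assoc]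
    · refine ⟨1, u, v.take (b - u.length - 1), QL d (v.drop (b - u.length - 1)) bs,
        fun x => ?_⟩
      rw [QL_cons]
      have h1 : (u ++ x :: v).take b = u ++ x :: v.take (b - u.length - 1) := by
        rw [List.take_append, List.take_of_length_le hb.le]
        obtain ⟨m, hm⟩ : ∃ m, b - u.length = m + 1 := ⟨b - u.length - 1, by omega⟩
        rw [hm, List.take_succ_cons]
        simp
      have h2 : (u ++ x :: v).drop b = v.drop (b - u.length - 1) := by
        rw [List.drop_append, List.drop_of_length_le hb.le, List.nil_append]
        obtain ⟨m, hm⟩ : ∃ m, b - u.length = m + 1 := ⟨b - u.length - 1, by omega⟩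
        rw [hm, List.drop_succ_cons]
        simp
      rw [h1, h2, one_mul]

lemma QL_add_slot (bs : List ℕ) (u v : List (KA k A)) (h : u.length < bs.sum)
    (x y : KA k A) :
    QL d (u ++ (x + y) :: v) bs = QL d (u ++ x :: v) bs + QL d (u ++ y :: v) bs := by
  obtain ⟨L, w₁, w₂, R, hL⟩ := QL_slot d bs u v h
  rw [hL, hL, hL, dFold_add_slot, map_add, add_mul, mul_add]

lemma QL_smul_slot (bs : List ℕ) (u v : List (KA k A)) (h : u.length < bs.sum)
    (b : k) (x : KA k A) :
    QL d (u ++ (b • x) :: v) bs = b • QL d (u ++ x :: v) bs := by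
  obtain ⟨L, w₁, w₂, R, hL⟩ := QL_slot d bs u v h
  rw [hL, hL, dFold_smul_slot, map_smul, smul_mul_assoc, mul_smul_comm]

lemma QL_zero_slot (bs : List ℕ) (u v : List (KA k A)) (h : u.length < bs.sum) :
    QL d (u ++ (0 : KA k A) :: v) bs = 0 := by
  have := QL_smul_slot d bs u v h 0 0
  rw [smul_zero] at this
  rw [this, zero_smul]

end Aux4

section Aux5

set_option linter.unusedSectionVars false
set_option maxHeartbeats 1000000

variable {k A : Type*} [Field k] [CharZero k] [Countable A]
variable (d : KA k A →ₗ[k] KA k A →ₗ[k] KA k A)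

lemma lemmaB (c : ℕ → k) :
    ∀ (xs : List (KA k A)) (ys : List A),
      Psi d c (PP ((ys.map toKA) ++ xs))
        = ∑ bs ∈ Cset (ys.length + xs.length),
            ((bs.map c).prod) • QL d ((ys.map toKA) ++ xs) bs
  | [], ys => by
    rw [List.append_nil, PP_map_toKA, psi_word]
    simp only [IW_eq_QL]
    rw [sum_comp_eq_sum_Cset ys.length
      (fun bs => ((bs.map c).prod) • QL d (ys.map toKA) bs)]
    simp
  | x :: xs, ys => by
    simp only [List.length_cons]
    have hcov : ∀ bs ∈ Cset (ys.length + (xs.length + 1)),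
        (ys.map toKA : List (KA k A)).length < bs.sum := by
      intro bs hbs
      rcases mem_Cset.1 hbs with ⟨h1, -⟩
      simp [h1]
    induction x using Finsupp.induction_linear with
    | zero =>
      have hPP : PP ((ys.map toKA) ++ (0 : KA k A) :: xs) = 0 := by
        rw [PP_append, PP_cons, map_zero, zero_mul, mul_zero]
      rw [hPP, map_zero]
      refine (Finset.sum_eq_zero fun bs hbs => ?_).symm
      rw [QL_zero_slot d bs _ xs (hcov bs hbs), smul_zero]
    | add f g hf hg =>
      have hPP : PP ((ys.map toKA) ++ (f + g) :: xs)
          = PP ((ys.map toKA) ++ f :: xs) + PP ((ys.map toKA) ++ g :: xs) := by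
        rw [PP_append, PP_append, PP_append, PP_cons, PP_cons, PP_cons, map_add,
          add_mul, mul_add]
      rw [hPP, map_add, hf, hg, ← Finset.sum_add_distrib]
      refine Finset.sum_congr rfl fun bs hbs => ?_
      rw [QL_add_slot d bs _ xs (hcov bs hbs), smul_add]
    | single a b =>
      have hx : (Finsupp.single a b : KA k A) = b • toKA a := by
        rw [toKA, Finsupp.smul_single, smul_eq_mul, mul_one]
      have harr : (ys.map toKA) ++ (toKA a : KA k A) :: xs
          = ((ys ++ [a]).map toKA) ++ xs := by simp
      have hPP : PP ((ys.map toKA) ++ (Finsupp.single a b : KA k A) :: xs)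
          = b • PP (((ys ++ [a]).map toKA) ++ xs) := by
        rw [hx, PP_append, PP_cons, map_smul, smul_mul_assoc, mul_smul_comm,
          ← PP_cons, ← PP_append, harr]
      rw [hPP, map_smul, lemmaB c xs (ys ++ [a])]
      have hidx : (ys ++ [a]).length + xs.length = ys.length + (xs.length + 1) := by
        simp
        omega
      rw [hidx, Finset.smul_sum]
      refine Finset.sum_congr rfl fun bs hbs => ?_
      rw [hx, QL_smul_slot d bs _ xs (hcov bs hbs), harr, smul_comm]

end Aux5

section Aux6

set_option linter.unusedSectionVars false
set_option maxHeartbeats 1000000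

variable {k A : Type*} [Field k] [CharZero k] [Countable A]
variable (d : KA k A →ₗ[k] KA k A →ₗ[k] KA k A)

lemma lemmaB' (c : ℕ → k) (xs : List (KA k A)) :
    Psi d c (PP xs) = ∑ bs ∈ Cset xs.length, ((bs.map c).prod) • QL d xs bs := by
  simpa using lemmaB d c xs []

lemma psiT_PP (xs : List (KA k A)) :
    Psi d (cT k) (PP xs) = ((-1 : k) ^ xs.length) • PP xs := by
  rw [lemmaB' d (cT k) xs]
  rw [Finset.sum_eq_single_of_mem (List.replicate xs.length 1)]
  · rw [QL_replicate_one, List.map_replicate, List.prod_replicate]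
    norm_num [cT]
  · exact mem_Cset.2 ⟨by simp, fun i hi => by
      rcases List.eq_of_mem_replicate hi with rfl; norm_num⟩
  · intro bs hbs hne
    rcases mem_Cset.1 hbs with ⟨h1, h2⟩
    have : ∃ i ∈ bs, i ≠ 1 := by
      by_contra hc
      push_neg at hc
      have : bs = List.replicate bs.length 1 := List.eq_replicate_of_mem hc
      have hlen : bs.length = xs.length := by
        have hsum : (List.replicate bs.length (1:ℕ)).sum = xs.length := by
          rw [← this]; exact h1
        simpa using hsum
      rw [hlen] at this
      exact hne this
    rcases this with ⟨i, hi, hne1⟩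
    have : cT k i = 0 := by simp [cT, hne1]
    have hmem : (0 : k) ∈ bs.map (cT k) := by
      rw [← this]
      exact List.mem_map_of_mem (f := cT k) hi
    rw [List.prod_eq_zero hmem, zero_smul]

/-- `I[w]` for a block list. -/
def IWL (w : List A) (bs : List ℕ) : KAlg k A :=
  QL d (w.map toKA) bs

lemma IW_eq_IWL (w : List A) (I : Composition w.length) :
    IW d w I = IWL d w I.blocks := IW_eq_QL d w I

lemma psi_word_Cset (c : ℕ → k) (w : List A) :
    Psi d c (word w) = ∑ bs ∈ Cset w.length, ((bs.map c).prod) • IWL d w bs := by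
  have := lemmaB' d c (w.map toKA)
  rw [PP_map_toKA] at this
  simpa [IWL] using this

lemma IWL_eq_PP (w : List A) (bs : List ℕ) :
    IWL d w bs = PP ((w.splitWrtCompositionAux bs).map (dChunk d)) := by
  rw [IWL, QL, splitAux_map, List.map_map, PP, List.map_map]
  congr 1
  refine List.map_congr_left fun ch _ => ?_
  simp [Function.comp, dFold_map_toKA]

lemma psiT_IWL (w : List A) (bs : List ℕ) :
    Psi d (cT k) (IWL d w bs) = ((-1 : k) ^ bs.length) • IWL d w bs := by
  rw [IWL_eq_PP, psiT_PP]
  congr 2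
  rw [List.length_map, List.length_splitWrtCompositionAux]

lemma take_flatten_split {α : Type*} :
    ∀ (j : ℕ) (bs : List ℕ) (w : List α),
      ((w.splitWrtCompositionAux bs).take j).flatten = w.take ((bs.take j).sum)
  | 0, bs, w => by simp
  | j + 1, [], w => by
    show (List.take (j+1) (w.splitWrtCompositionAux [])).flatten = _
    simp [List.splitWrtCompositionAux]
  | j + 1, b :: bs', w => by
    rw [List.splitWrtCompositionAux_cons, List.take_succ_cons, List.flatten_cons,
      take_flatten_split j bs' (w.drop b), List.take_succ_cons, List.sum_cons,
      List.take_add]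

lemma drop_split {α : Type*} :
    ∀ (j : ℕ) (bs : List ℕ) (w : List α),
      (w.splitWrtCompositionAux bs).drop j
        = (w.drop ((bs.take j).sum)).splitWrtCompositionAux (bs.drop j)
  | 0, bs, w => by simp
  | j + 1, [], w => by simp [List.splitWrtCompositionAux]
  | j + 1, b :: bs', w => by
    rw [List.splitWrtCompositionAux_cons, List.drop_succ_cons,
      drop_split j bs' (w.drop b), List.take_succ_cons, List.sum_cons,
      List.drop_drop, List.drop_succ_cons, Nat.add_comm]

lemma split_gather {α : Type*} :
    ∀ (J bs : List ℕ) (w : List α), bs.sum = w.length →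
      w.splitWrtCompositionAux ((bs.splitWrtCompositionAux J).map List.sum)
        = ((w.splitWrtCompositionAux bs).splitWrtCompositionAux J).map List.flatten
  | [], bs, w, _ => by simp [List.splitWrtCompositionAux]
  | j :: J', bs, w, h => by
    rw [List.splitWrtCompositionAux_cons (l := bs), List.map_cons,
      List.splitWrtCompositionAux_cons (l := w),
      List.splitWrtCompositionAux_cons (l := w.splitWrtCompositionAux bs),
      List.map_cons]
    congr 1
    · rw [← take_flatten_split]
    · rw [drop_split, split_gather J' (bs.drop j) (w.drop ((bs.take j).sum)) (by
        rw [List.length_drop, ← h]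
        have := List.sum_take_add_sum_drop bs j
        omega)]

end Aux6

section Aux7

set_option linter.unusedSectionVars false
set_option maxHeartbeats 1000000

variable {k A : Type*} [Field k] [CharZero k] [Countable A]
variable (d : KA k A →ₗ[k] KA k A →ₗ[k] KA k A)

lemma psi_gather (hd_assoc : ∀ x y z, d (d x y) z = d x (d y z))
    (c : ℕ → k) (w : List A) (bs : List ℕ) (hbs : bs ∈ Cset w.length) :
    Psi d c (IWL d w bs)
      = ∑ J ∈ Cset bs.length,
          ((J.map c).prod) • IWL d w ((bs.splitWrtCompositionAux J).map List.sum) := by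
  rcases mem_Cset.1 hbs with ⟨hsum, hpos⟩
  set pieces := w.splitWrtCompositionAux bs with hp
  have hplen : pieces.length = bs.length := List.length_splitWrtCompositionAux w bs
  have hmaplen : pieces.map List.length = bs :=
    List.map_length_splitWrtCompositionAux (le_of_eq hsum)
  have hpmem : ∀ g ∈ pieces, g ≠ [] := by
    intro g hg
    have : g.length ∈ pieces.map List.length := List.mem_map_of_mem hg
    rw [hmaplen] at this
    have := hpos _ this
    exact List.ne_nil_of_length_pos this
  rw [IWL_eq_PP, lemmaB']
  have hxslen : ((pieces.map (dChunk d)).length) = bs.length := by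
    rw [List.length_map, hplen]
  rw [hxslen]
  refine Finset.sum_congr rfl fun J hJ => ?_
  rcases mem_Cset.1 hJ with ⟨hJsum, hJpos⟩
  congr 1
  have hJsum' : J.sum = pieces.length := by rw [hJsum, hplen]
  have hGmem : ∀ G ∈ pieces.splitWrtCompositionAux J, G ≠ [] := by
    intro G hG
    have : G.length ∈ (pieces.splitWrtCompositionAux J).map List.length :=
      List.mem_map_of_mem hG
    rw [List.map_length_splitWrtCompositionAux (le_of_eq hJsum')] at this
    exact List.ne_nil_of_length_pos (hJpos _ this)
  have hGsub : ∀ G ∈ pieces.splitWrtCompositionAux J, ∀ g ∈ G, g ≠ [] := by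
    intro G hG g hg
    refine hpmem g ?_
    have : (pieces.splitWrtCompositionAux J).flatten = pieces :=
      List.flatten_splitWrtCompositionAux hJsum'
    rw [← this]
    exact List.mem_flatten.2 ⟨G, hG, hg⟩
  rw [QL, splitAux_map, List.map_map, IWL_eq_PP, split_gather J bs w hsum, PP,
    List.map_map, List.map_map]
  congr 1
  refine List.map_congr_left fun G hG => ?_
  show incl (dFold d (G.map (dChunk d))) = incl (dChunk d G.flatten)
  congr 1
  exact dFold_map_dChunk d hd_assoc G (hGmem G hG) (hGsub G hG)

end Aux7

section Aux8

set_option linter.unusedSectionVars false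
set_option maxHeartbeats 1000000

variable {k A : Type*} [Field k] [CharZero k] [Countable A]

/-- Finset of lists of compositions of the entries of `K`. -/
def Pset : List ℕ → Finset (List (List ℕ))
  | [] => {[]}
  | b :: K => ((Cset b) ×ˢ (Pset K)).image (fun p => p.1 :: p.2)

lemma mem_Pset : ∀ {K : List ℕ} {ps : List (List ℕ)},
    ps ∈ Pset K ↔ List.Forall₂ (fun p b => p ∈ Cset b) ps K := by
  intro K
  induction K with
  | nil =>
    intro ps
    simp [Pset, List.forall₂_nil_right_iff]
  | cons b K ih =>
    intro ps
    constructor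
    · intro h
      rcases Finset.mem_image.1 h with ⟨⟨p, q⟩, hpq, rfl⟩
      rcases Finset.mem_product.1 hpq with ⟨h1, h2⟩
      exact List.Forall₂.cons h1 (ih.1 h2)
    · intro h
      rcases List.forall₂_cons_right_iff.1 h with ⟨p, q, h1, h2, rfl⟩
      exact Finset.mem_image.2 ⟨⟨p, q⟩, Finset.mem_product.2 ⟨h1, ih.2 h2⟩, rfl⟩

lemma map_sum_of_forall₂ : ∀ {ps : List (List ℕ)} {K : List ℕ},
    List.Forall₂ (fun p b => p ∈ Cset b) ps K → ps.map List.sum = K := by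
  intro ps K h
  induction h with
  | nil => rfl
  | cons h1 h2 ih =>
    rw [List.map_cons, ih, (mem_Cset.1 h1).1]

lemma Pset_prod {M : Type*} [CommSemiring M] (h : List ℕ → M) :
    ∀ K : List ℕ,
      (∑ ps ∈ Pset K, (ps.map h).prod) = (K.map (fun b => ∑ c ∈ Cset b, h c)).prod
  | [] => by simp [Pset]
  | b :: K => by
    rw [Pset, Finset.sum_image (by
      intro p hp q hq hpq
      have h1 : p.1 = q.1 := by
        have := congrArg List.head? hpq; simpa using this
      have h2 : p.2 = q.2 := by
        have := congrArg List.tail hpq; simpa using this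
      exact Prod.ext h1 h2)]
    rw [Finset.sum_product, List.map_cons, List.prod_cons, ← Pset_prod h K]
    exact (Finset.sum_mul_sum (Cset b) (Pset K) h (fun q => (q.map h).prod)).symm

lemma forall₂_mem_left {R : List ℕ → ℕ → Prop} : ∀ {ps : List (List ℕ)} {K : List ℕ},
    List.Forall₂ R ps K → ∀ p ∈ ps, ∃ b ∈ K, R p b := by
  intro ps K h
  induction h with
  | nil => intro p hp; cases hp
  | @cons a b l₁ l₂ h1 h2 ih =>
    intro p hp
    rcases List.mem_cons.1 hp with rfl | hp
    · exact ⟨b, by simp, h1⟩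
    · rcases ih p hp with ⟨b', hb', hR⟩
      exact ⟨b', List.mem_cons_of_mem _ hb', hR⟩

lemma splitAux_flatten_map_length :
    ∀ (ps : List (List ℕ)), (ps.flatten).splitWrtCompositionAux (ps.map List.length) = ps
  | [] => rfl
  | p :: ps => by
    rw [List.map_cons, List.flatten_cons, List.splitWrtCompositionAux_cons,
      List.take_left, List.drop_left, splitAux_flatten_map_length ps]

/-- The key reindexing: summing over pairs (composition `I` of `n`, composition `J` of the
length of `I`) is the same as summing over pairs (composition `K` of `n`, refinements). -/
lemma double_sum_reindex {M : Type*} [AddCommMonoid M] [Module k M]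
    (n : ℕ) (F : List ℕ → M) (gc fc : ℕ → k) :
    (∑ I ∈ Cset n, ∑ J ∈ Cset I.length,
        (((I.map gc).prod * (J.map fc).prod) •
          F ((I.splitWrtCompositionAux J).map List.sum)))
      = ∑ K ∈ Cset n, ∑ ps ∈ Pset K,
          ((ps.map (fun p => fc p.length * (p.map gc).prod)).prod) • F K := by
  rw [← Finset.sum_sigma ((Cset n)) (fun I => Cset I.length)
    (fun x => (((x.1.map gc).prod * (x.2.map fc).prod) •
      F ((x.1.splitWrtCompositionAux x.2).map List.sum)))]
  rw [← Finset.sum_sigma ((Cset n)) (fun K => Pset K)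
    (fun x => ((x.2.map (fun p => fc p.length * (p.map gc).prod)).prod) • F x.1)]
  refine Finset.sum_nbij'
    (fun x => (⟨(x.1.splitWrtCompositionAux x.2).map List.sum,
        x.1.splitWrtCompositionAux x.2⟩ : Σ _ : List ℕ, List (List ℕ)))
    (fun y => (⟨y.2.flatten, y.2.map List.length⟩ : Σ _ : List ℕ, List ℕ))
    ?_ ?_ ?_ ?_ ?_
  · rintro ⟨I, J⟩ hIJ
    rw [Finset.mem_sigma] at hIJ ⊢
    obtain ⟨hI, hJ⟩ := hIJ
    rcases mem_Cset.1 hI with ⟨hIsum, hIpos⟩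
    rcases mem_Cset.1 hJ with ⟨hJsum, hJpos⟩
    have hmemps : ∀ p ∈ I.splitWrtCompositionAux J, p ∈ Cset p.sum := by
      intro p hp
      refine mem_Cset.2 ⟨rfl, fun x hx => ?_⟩
      refine hIpos x ?_
      rw [← List.flatten_splitWrtCompositionAux (l := I) hJsum]
      exact List.mem_flatten.2 ⟨p, hp, hx⟩
    constructor
    · refine mem_Cset.2 ⟨?_, ?_⟩
      · rw [← List.sum_flatten, List.flatten_splitWrtCompositionAux hJsum, hIsum]
      · intro b hb
        rcases List.mem_map.1 hb with ⟨p, hp, rfl⟩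
        have hpne : p ≠ [] := by
          have : p.length ∈ (I.splitWrtCompositionAux J).map List.length :=
            List.mem_map_of_mem hp
          rw [List.map_length_splitWrtCompositionAux (le_of_eq hJsum)] at this
          exact List.ne_nil_of_length_pos (hJpos _ this)
        refine List.sum_pos p (fun x hx => ?_) hpne
        exact (mem_Cset.1 (hmemps p hp)).2 x hx
    · refine mem_Pset.2 ?_
      rw [List.forall₂_map_right_iff]
      exact List.forall₂_same.2 hmemps
  · rintro ⟨K, ps⟩ hKps
    rw [Finset.mem_sigma] at hKps ⊢
    obtain ⟨hK, hps⟩ := hKps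
    have hfa := mem_Pset.1 hps
    have hmap : ps.map List.sum = K := map_sum_of_forall₂ hfa
    rcases mem_Cset.1 hK with ⟨hKsum, hKpos⟩
    have hmem : ∀ p ∈ ps, ∃ b ∈ K, p ∈ Cset b := forall₂_mem_left hfa
    constructor
    · refine mem_Cset.2 ⟨?_, fun x hx => ?_⟩
      · rw [List.sum_flatten, hmap, hKsum]
      · rcases List.mem_flatten.1 hx with ⟨p, hp, hxp⟩
        rcases hmem p hp with ⟨b, _, hpb⟩
        exact (mem_Cset.1 hpb).2 x hxp
    · refine mem_Cset.2 ⟨?_, fun x hx => ?_⟩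
      · rw [← List.length_flatten (L := ps)]
      · rcases List.mem_map.1 hx with ⟨p, hp, rfl⟩
        rcases hmem p hp with ⟨b, hbK, hpb⟩
        rcases mem_Cset.1 hpb with ⟨hpsum, hppos⟩
        have hbpos : 0 < b := hKpos b hbK
        have : p ≠ [] := by
          intro hnil
          rw [hnil] at hpsum
          simp at hpsum
          omega
        exact List.length_pos_iff.2 this
  · rintro ⟨I, J⟩ hIJ
    rw [Finset.mem_sigma] at hIJ
    obtain ⟨hI, hJ⟩ := hIJ
    rcases mem_Cset.1 hJ with ⟨hJsum, hJpos⟩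
    dsimp only
    refine Sigma.ext ?_ (heq_of_eq ?_)
    · exact List.flatten_splitWrtCompositionAux hJsum
    · exact List.map_length_splitWrtCompositionAux (le_of_eq hJsum)
  · rintro ⟨K, ps⟩ hKps
    rw [Finset.mem_sigma] at hKps
    obtain ⟨hK, hps⟩ := hKps
    have hmap : ps.map List.sum = K := map_sum_of_forall₂ (mem_Pset.1 hps)
    dsimp only
    refine Sigma.ext ?_ (heq_of_eq ?_)
    · rw [splitAux_flatten_map_length ps, hmap]
    · rw [splitAux_flatten_map_length ps]
  · rintro ⟨I, J⟩ hIJ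
    rw [Finset.mem_sigma] at hIJ
    obtain ⟨hI, hJ⟩ := hIJ
    dsimp only at hI hJ ⊢
    rcases mem_Cset.1 hJ with ⟨hJsum, hJpos⟩
    congr 1
    rw [List.prod_map_mul, mul_comm]
    congr 1
    · conv_lhs => rw [← List.map_length_splitWrtCompositionAux (l := I) (le_of_eq hJsum)]
      rw [List.map_map]
      rfl
    · conv_lhs => rw [← List.flatten_splitWrtCompositionAux (l := I) hJsum]
      rw [List.map_flatten, List.prod_flatten, List.map_map]
      rfl

end Aux8

section Aux9

set_option linter.unusedSectionVars false
set_option maxHeartbeats 1000000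

variable {k : Type*} [Field k] [CharZero k]

lemma Cset_zero : Cset 0 = ({[]} : Finset (List ℕ)) := by
  ext l
  rw [mem_Cset, Finset.mem_singleton]
  constructor
  · rintro ⟨h1, h2⟩
    cases l with
    | nil => rfl
    | cons a t =>
      exfalso
      have := h2 a (by simp)
      simp at h1
      omega
  · rintro rfl
    exact ⟨rfl, by simp⟩

lemma Cset_first_block {M : Type*} [AddCommMonoid M] (n : ℕ) (hn : 0 < n)
    (g : List ℕ → M) :
    ∑ l ∈ Cset n, g l = ∑ j ∈ Finset.Icc 1 n, ∑ t ∈ Cset (n - j), g (j :: t) := by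
  rw [← Finset.sum_sigma (Finset.Icc 1 n) (fun j => Cset (n - j)) (fun x => g (x.1 :: x.2))]
  refine Finset.sum_nbij' (fun l => ⟨l.getD 0 0, l.tail⟩) (fun x => x.1 :: x.2) ?_ ?_ ?_ ?_ ?_
  · intro l hl
    rcases mem_Cset.1 hl with ⟨h1, h2⟩
    cases l with
    | nil => simp at h1; omega
    | cons a t =>
      rw [Finset.mem_sigma]
      simp only [List.getD_cons_zero, List.tail_cons]
      constructor
      · refine Finset.mem_Icc.2 ⟨h2 a (by simp), ?_⟩
        simp at h1
        omega
      · refine mem_Cset.2 ⟨?_, fun i hi => h2 i (by simp [hi])⟩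
        simp at h1 ⊢
        omega
  · rintro ⟨j, t⟩ hjt
    rw [Finset.mem_sigma] at hjt
    dsimp only at hjt ⊢
    obtain ⟨hj, ht⟩ := hjt
    rcases Finset.mem_Icc.1 hj with ⟨hj1, hj2⟩
    rcases mem_Cset.1 ht with ⟨h1, h2⟩
    refine mem_Cset.2 ⟨?_, ?_⟩
    · simp only [List.sum_cons, h1]
      omega
    · intro i hi
      rcases List.mem_cons.1 hi with rfl | hi
      · omega
      · exact h2 i hi
  · intro l hl
    rcases mem_Cset.1 hl with ⟨h1, h2⟩
    cases l with
    | nil => simp at h1; omega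
    | cons a t => simp
  · rintro ⟨j, t⟩ _
    simp
  · intro l hl
    rcases mem_Cset.1 hl with ⟨h1, h2⟩
    cases l with
    | nil => simp at h1; omega
    | cons a t => simp

/-- The weight of a composition. -/
def W (k : Type*) [Field k] (l : List ℕ) : k :=
  ((l.length).factorial : k)⁻¹ * (l.map (fun i : ℕ => ((i : k))⁻¹)).prod

/-- The sum of weights over the compositions of `n`. -/
def aseq (k : Type*) [Field k] (n : ℕ) : k := ∑ l ∈ Cset n, W k l

lemma aseq_zero : aseq k 0 = 1 := by
  rw [aseq, Cset_zero]
  simp [W]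

lemma list_sum_getD : ∀ l : List ℕ, ∑ r ∈ Finset.range l.length, l.getD r 0 = l.sum
  | [] => rfl
  | a :: t => by
    rw [List.length_cons, Finset.sum_range_succ', List.sum_cons]
    simp only [List.getD_cons_succ, List.getD_cons_zero]
    rw [list_sum_getD t, Nat.add_comm]

lemma W_rotate (l : List ℕ) (r : ℕ) : W k (l.rotate r) = W k l := by
  rw [W, W, List.length_rotate]
  congr 1
  exact List.Perm.prod_eq ((List.rotate_perm l r).map _)

lemma rotate_mem_Cset {n : ℕ} {l : List ℕ} (hl : l ∈ Cset n) (r : ℕ) :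
    l.rotate r ∈ Cset n := by
  rcases mem_Cset.1 hl with ⟨h1, h2⟩
  refine mem_Cset.2 ⟨?_, fun i hi => h2 i ((List.mem_rotate).1 hi)⟩
  rw [List.Perm.sum_eq (List.rotate_perm l r), h1]

lemma aseq_rec (n : ℕ) (hn : 0 < n) :
    (n : k) * aseq k n = ∑ j ∈ Finset.Icc 1 n, aseq k (n - j) := by
  have claim1 : (n : k) * aseq k n
      = ∑ x ∈ (Cset n).sigma (fun l => Finset.range l.length),
          ((x.1.getD x.2 0 : ℕ) : k) * W k x.1 := by
    rw [Finset.sum_sigma, aseq, Finset.mul_sum]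
    refine Finset.sum_congr rfl fun l hl => ?_
    dsimp only
    rw [← Finset.sum_mul]
    congr 1
    have : ∑ r ∈ Finset.range l.length, ((l.getD r 0 : ℕ) : k)
        = ((∑ r ∈ Finset.range l.length, l.getD r 0 : ℕ) : k) := by
      push_cast
      rfl
    rw [this, list_sum_getD, (mem_Cset.1 hl).1]
  have claim2 : ∑ x ∈ (Cset n).sigma (fun l => Finset.range l.length),
        ((x.1.getD x.2 0 : ℕ) : k) * W k x.1
      = ∑ x ∈ (Cset n).sigma (fun l => Finset.range l.length),
          ((x.1.getD 0 0 : ℕ) : k) * W k x.1 := by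
    refine Finset.sum_nbij' (fun x => ⟨x.1.rotate x.2, x.2⟩)
      (fun x => ⟨x.1.rotate (x.1.length - x.2), x.2⟩) ?_ ?_ ?_ ?_ ?_
    · rintro ⟨l, r⟩ h
      rw [Finset.mem_sigma] at h ⊢
      exact ⟨rotate_mem_Cset h.1 r, by simpa using h.2⟩
    · rintro ⟨l, r⟩ h
      rw [Finset.mem_sigma] at h ⊢
      exact ⟨rotate_mem_Cset h.1 _, by simpa using h.2⟩
    · rintro ⟨l, r⟩ h
      rw [Finset.mem_sigma] at h
      have hr : r < l.length := by simpa using h.2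
      dsimp only
      refine Sigma.ext ?_ (HEq.refl _)
      dsimp only
      rw [List.rotate_rotate, List.length_rotate, Nat.add_sub_cancel' hr.le,
        List.rotate_length]
    · rintro ⟨l, r⟩ h
      rw [Finset.mem_sigma] at h
      have hr : r < l.length := by simpa using h.2
      dsimp only
      refine Sigma.ext ?_ (HEq.refl _)
      dsimp only
      rw [List.rotate_rotate, Nat.sub_add_cancel hr.le, List.rotate_length]
    · rintro ⟨l, r⟩ h
      rw [Finset.mem_sigma] at h
      have hr : r < l.length := by simpa using h.2
      dsimp only
      rw [W_rotate]
      congr 2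
      have h0 : 0 < (l.rotate r).length := by
        rw [List.length_rotate]; omega
      rw [List.getD_eq_getElem l 0 hr, List.getD_eq_getElem _ 0 h0,
        List.getElem_rotate l r 0]
      simp [Nat.mod_eq_of_lt hr]
  have claim3 : ∑ x ∈ (Cset n).sigma (fun l => Finset.range l.length),
        ((x.1.getD 0 0 : ℕ) : k) * W k x.1
      = ∑ l ∈ Cset n, (l.length : k) * (((l.getD 0 0 : ℕ)) : k) * W k l := by
    rw [Finset.sum_sigma]
    refine Finset.sum_congr rfl fun l hl => ?_
    dsimp only
    rw [Finset.sum_const, Finset.card_range, nsmul_eq_mul, mul_assoc]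
  have claim4 : ∀ l ∈ Cset n,
      (l.length : k) * (((l.getD 0 0 : ℕ)) : k) * W k l = W k l.tail := by
    intro l hl
    rcases mem_Cset.1 hl with ⟨h1, h2⟩
    cases l with
    | nil => simp at h1; omega
    | cons a t =>
      have ha : (0:ℕ) < a := h2 a (by simp)
      have hak : ((a : ℕ) : k) ≠ 0 := Nat.cast_ne_zero.2 (by omega)
      have hfact : ((t.length.factorial : ℕ) : k) ≠ 0 :=
        Nat.cast_ne_zero.2 (Nat.factorial_ne_zero _)
      have h1len : (1 + (t.length : k)) ≠ 0 := by
        rw [add_comm]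
        exact Nat.cast_add_one_ne_zero t.length
      show ((t.length + 1 : ℕ) : k) * ((a:ℕ) : k) * W k (a :: t) = W k t
      rw [W, W, List.length_cons, List.map_cons, List.prod_cons, Nat.factorial_succ]
      push_cast
      field_simp
  rw [claim1, claim2, claim3, Finset.sum_congr rfl claim4,
    Cset_first_block n hn (fun l => W k l.tail)]
  rfl

lemma aseq_eq_one : ∀ n : ℕ, 0 < n → aseq k n = 1 := by
  intro n
  induction n using Nat.strong_induction_on with
  | _ n ih =>
    intro hn
    have hrec := aseq_rec (k := k) n hn
    have hsum : ∑ j ∈ Finset.Icc 1 n, aseq k (n - j) = (n : k) := by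
      have : ∀ j ∈ Finset.Icc 1 n, aseq k (n - j) = 1 := by
        intro j hj
        rcases Finset.mem_Icc.1 hj with ⟨hj1, hj2⟩
        rcases Nat.eq_or_lt_of_le hj2 with rfl | hlt
        · simpa using aseq_zero
        · exact ih (n - j) (by omega) (by omega)
      rw [Finset.sum_congr rfl this, Finset.sum_const, Nat.card_Icc]
      simp
    rw [hsum] at hrec
    have hne : (n : k) ≠ 0 := Nat.cast_ne_zero.2 (by omega)
    field_simp at hrec
    exact hrec

lemma sign_prod (l : List ℕ) : (l.map (fun b => (-1 : k) ^ b)).prod = (-1 : k) ^ l.sum := by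
  induction l with
  | nil => simp
  | cons a t ih => simp [pow_add, ih]

lemma sign_split (l : List ℕ) :
    (l.map (fun i : ℕ => (-1 : k) ^ i * ((i : k))⁻¹)).prod
      = (-1 : k) ^ l.sum * (l.map (fun i : ℕ => ((i : k))⁻¹)).prod := by
  induction l with
  | nil => simp
  | cons a t ih =>
    simp only [List.map_cons, List.prod_cons, List.sum_cons, ih, pow_add]
    ring

lemma neg_cLog (i : ℕ) (hi : 0 < i) : -(cLog k i) = (-1 : k) ^ i * ((i : k))⁻¹ := by
  rw [cLog]
  rw [if_neg (by omega)]
  have : i = (i - 1) + 1 := by omega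
  rw [div_eq_mul_inv, ← neg_mul]
  congr 1
  conv_rhs => rw [this]
  rw [pow_succ]
  ring

lemma block_identity (b : ℕ) (hb : 0 < b) :
    ∑ c ∈ Cset b, (cExp k c.length) * ((c.map (fun i => -(cLog k i))).prod)
      = (-1 : k) ^ b := by
  have : ∀ c ∈ Cset b, (cExp k c.length) * ((c.map (fun i => -(cLog k i))).prod)
      = (-1 : k) ^ b * W k c := by
    intro c hc
    rcases mem_Cset.1 hc with ⟨h1, h2⟩
    have hcne : c ≠ [] := by
      intro h
      rw [h] at h1
      simp at h1
      omega
    have hlen : c.length ≠ 0 := fun h => hcne (List.length_eq_zero_iff.1 h)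
    have hmap : c.map (fun i => -(cLog k i)) = c.map (fun i : ℕ => (-1:k)^i * ((i:k))⁻¹) :=
      List.map_congr_left fun i hi => neg_cLog i (h2 i hi)
    rw [hmap, sign_split, h1, cExp, if_neg hlen, W]
    ring
  rw [Finset.sum_congr rfl this, ← Finset.mul_sum, ← aseq, aseq_eq_one b hb, mul_one]

end Aux9

section Aux10

set_option linter.unusedSectionVars false
set_option maxHeartbeats 1000000

variable {k : Type*} [Field k] [CharZero k]

lemma neg_map_prod (f : ℕ → k) (l : List ℕ) :
    (l.map (fun i => -f i)).prod = (-1 : k) ^ l.length * (l.map f).prod := by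
  induction l with
  | nil => simp
  | cons a t ih =>
    simp only [List.map_cons, List.prod_cons, List.length_cons, ih, pow_succ]
    ring

end Aux10
/-- Corollary 3.4 of Hoffman–Ihara: `Σ = exp ∘ T ∘ log ∘ T`, where
`Σ = Ψ_{t/(1-t)}`, `T = Ψ_{-t}`, `exp = Ψ_{e^t-1}` and `log = Ψ_{log(1+t)}`. -/
theorem Sigma_eq_exp_T_log_T
    {k A : Type*} [Field k] [CharZero k] [Countable A]
    (d : KA k A →ₗ[k] KA k A →ₗ[k] KA k A)
    (hd_comm : ∀ x y, d x y = d y x)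
    (hd_assoc : ∀ x y z, d (d x y) z = d x (d y z)) :
    Psi d (cSig k) =
      Psi d (cExp k) ∘ₗ Psi d (cT k) ∘ₗ Psi d (cLog k) ∘ₗ Psi d (cT k) := by
  refine ext_word fun w => ?_
  simp only [LinearMap.comp_apply]
  have hmapT : Psi d (cT k) (word w) = ((-1 : k) ^ w.length) • word w := by
    rw [← PP_map_toKA, psiT_PP, List.length_map]
  have lhs_eq : Psi d (cSig k) (word w) = ∑ K ∈ Cset w.length, IWL d w K := by
    rw [psi_word_Cset]
    refine Finset.sum_congr rfl fun K hK => ?_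
    rcases mem_Cset.1 hK with ⟨h1, h2⟩
    have hone : K.map (cSig k) = K.map (fun _ => (1 : k)) :=
      List.map_congr_left fun b hb => by
        have := h2 b hb
        rw [cSig, if_neg (by omega)]
    rw [hone]
    simp
  have step2 : Psi d (cT k) (Psi d (cLog k) (word w))
      = ∑ I ∈ Cset w.length, ((I.map (fun i => -(cLog k i))).prod) • IWL d w I := by
    rw [psi_word_Cset, map_sum]
    refine Finset.sum_congr rfl fun I hI => ?_
    rw [map_smul, psiT_IWL, smul_smul, mul_comm, ← neg_map_prod (cLog k) I]
  have inner : ∀ K ∈ Cset w.length,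
      (∑ ps ∈ Pset K,
          ((ps.map (fun p => cExp k p.length *
            (p.map (fun i => -(cLog k i))).prod)).prod) • IWL d w K)
        = ((-1 : k) ^ w.length) • IWL d w K := by
    intro K hK
    rw [← Finset.sum_smul, Pset_prod]
    rcases mem_Cset.1 hK with ⟨h1, h2⟩
    have hmap : K.map (fun b => ∑ c ∈ Cset b,
        cExp k c.length * (c.map (fun i => -(cLog k i))).prod)
        = K.map (fun b => (-1 : k) ^ b) :=
      List.map_congr_left fun b hb => block_identity b (h2 b hb)
    rw [hmap, sign_prod, h1]
  have step3 : Psi d (cExp k)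
      (∑ I ∈ Cset w.length, ((I.map (fun i => -(cLog k i))).prod) • IWL d w I)
      = ∑ K ∈ Cset w.length, ((-1 : k) ^ w.length) • IWL d w K := by
    rw [map_sum]
    have e1 : ∀ I ∈ Cset w.length,
        Psi d (cExp k) (((I.map (fun i => -(cLog k i))).prod) • IWL d w I)
          = ∑ J ∈ Cset I.length,
              (((I.map (fun i => -(cLog k i))).prod * (J.map (cExp k)).prod) •
                IWL d w ((I.splitWrtCompositionAux J).map List.sum)) := by
      intro I hI
      rw [map_smul, psi_gather d hd_assoc (cExp k) w I hI, Finset.smul_sum]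
      refine Finset.sum_congr rfl fun J hJ => ?_
      rw [smul_smul]
    rw [Finset.sum_congr rfl e1,
      double_sum_reindex w.length (IWL d w) (fun i => -(cLog k i)) (cExp k)]
    exact Finset.sum_congr rfl inner
  rw [hmapT, map_smul, map_smul, map_smul, step2, step3, lhs_eq, Finset.smul_sum]
  refine Finset.sum_congr rfl fun K hK => ?_
  rw [smul_smul, ← pow_add, Even.neg_one_pow ⟨w.length, rfl⟩, one_smul]

end QuasiShuffle
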